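/- Let k be a finite field with q elements and for d₁, d₂ ≥ 0 let P_{d₁,d₂} be the set of pairs (P,Q) of homogeneous polynomials in k[T,U] of degrees d₁ and d₂ respectively such that P and Q are relatively prime and T does not divide P. Then for 1 ≤ j ≤ t-1, |P_{t-j,j}| = q·|P_{j,t-j-1}|. -/

import Mathlib

/-- The set P_{d₁,d₂} of pairs (P,Q) of homogeneous polynomials in k[T,U] of degrees
d₁ and d₂ respectively, such that P and Q are relatively prime and T does not divide P. -/
def homCoprimePairs (k : Type) [Field k] (d₁ d₂ : ℕ) :
    Set (MvPolynomial (Fin 2) k × MvPolynomial (Fin 2) k) :=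
  {PQ | PQ.1.IsHomogeneous d₁ ∧ PQ.2.IsHomogeneous d₂ ∧ IsRelPrime PQ.1 PQ.2 ∧
    ¬ (MvPolynomial.X 0 ∣ PQ.1)}

set_option linter.unusedSectionVars false
namespace Stmt2Aux

open MvPolynomial

variable {k : Type} [Field k] [Fintype k]

local notation "R2" => MvPolynomial (Fin 2) k

lemma fin2_decomp (m : Fin 2 →₀ ℕ) :
    m = Finsupp.single 0 (m 0) + Finsupp.single 1 (m 1) := by
  ext j
  fin_cases j <;> simp [Finsupp.single_apply]

lemma homog_iff {φ : R2} {n : ℕ} :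
    φ.IsHomogeneous n ↔ ∀ m : Fin 2 →₀ ℕ, coeff m φ ≠ 0 → m 0 + m 1 = n := by
  have hw : ∀ m : Fin 2 →₀ ℕ, (Finsupp.weight 1) m = m 0 + m 1 := by
    intro m
    rw [Finsupp.weight_apply, Finsupp.sum_fintype]
    · simp [Fin.sum_univ_two]
    · intro i; simp
  constructor
  · intro h m hm
    rw [← hw m]
    exact h hm
  · intro h m hm
    rw [hw m]
    exact h m hm

lemma X0_dvd_iff {φ : R2} :
    (X (0 : Fin 2) ∣ φ) ↔ ∀ m : Fin 2 →₀ ℕ, coeff m φ ≠ 0 → m 0 ≠ 0 := by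
  classical
  constructor
  · rintro ⟨ψ, rfl⟩ m hm hm0
    rw [coeff_X_mul'] at hm
    simp [Finsupp.mem_support_iff, hm0] at hm
  · intro h
    rw [X_dvd_iff_modMonomial_eq_zero]
    apply MvPolynomial.ext
    intro m
    rw [coeff_zero]
    by_cases hle : Finsupp.single (0 : Fin 2) 1 ≤ m
    · exact coeff_modMonomial_of_le _ hle
    · rw [coeff_modMonomial_of_not_le _ hle]
      by_contra hc
      exact hle (Finsupp.single_le_iff.mpr (Nat.one_le_iff_ne_zero.mpr (h m hc)))

lemma primeT : Prime (X (0 : Fin 2) : R2) := by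
  rw [← MulEquiv.prime_iff (MvPolynomial.finSuccEquiv k 1).toRingEquiv.toMulEquiv]
  have : (MvPolynomial.finSuccEquiv k 1).toRingEquiv.toMulEquiv (X (0 : Fin 2) : R2)
      = Polynomial.X := by
    simpa using MvPolynomial.finSuccEquiv_X_zero (R := k) (n := 1)
  rw [this]
  exact Polynomial.prime_X

lemma relprime_X0 {P : R2} (h : ¬ X (0 : Fin 2) ∣ P) : IsRelPrime P (X (0 : Fin 2)) := by
  intro d hdP hdX
  rcases hdX with ⟨e, he⟩
  rcases (primeT (k := k)).irreducible.isUnit_or_isUnit he with hu | hu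
  · exact hu
  · exfalso
    apply h
    rcases hu with ⟨u, rfl⟩
    have hd : d = (X (0 : Fin 2) : R2) * (↑u⁻¹ : R2) :=
      (Units.eq_mul_inv_iff_mul_eq u).mpr he.symm
    exact dvd_trans (Dvd.intro _ hd.symm) hdP

lemma homog_of_X_mul {B : R2} {n : ℕ} (h : (X (0 : Fin 2) * B).IsHomogeneous (n + 1)) :
    B.IsHomogeneous n := by
  rw [homog_iff] at h ⊢
  intro m hm
  have h2 := h (Finsupp.single 0 1 + m) (by rw [coeff_X_mul]; exact hm)
  simp [Finsupp.single_apply] at h2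
  omega

lemma coeff_U_ne_zero {P : R2} {a : ℕ} (hP : P.IsHomogeneous a) (h : ¬ X (0 : Fin 2) ∣ P) :
    coeff (Finsupp.single 1 a) P ≠ 0 := by
  rw [X0_dvd_iff] at h
  push_neg at h
  obtain ⟨m, hm, hm0⟩ := h
  have hma := homog_iff.mp hP m hm
  have hmeq : m = Finsupp.single 1 a := by
    have h1 : m 1 = a := by omega
    rw [fin2_decomp m, hm0, h1]
    simp
  rwa [← hmeq]

lemma not_dvd_of_coeff_U {P : R2} {a : ℕ} (h : coeff (Finsupp.single 1 a) P ≠ 0) :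
    ¬ X (0 : Fin 2) ∣ P := by
  rw [X0_dvd_iff]
  push_neg
  refine ⟨Finsupp.single 1 a, h, ?_⟩
  simp [Finsupp.single_apply]

/-- coefficient parametrization of homogeneous polynomials of degree `d`. -/
noncomputable def hommap (d : ℕ) (f : Fin (d + 1) → k) : MvPolynomial (Fin 2) k :=
  ∑ i : Fin (d + 1), monomial (Finsupp.single 0 (i : ℕ) + Finsupp.single 1 (d - i)) (f i)

lemma expo_inj {d : ℕ} {i j : Fin (d + 1)}
    (h : (Finsupp.single (0 : Fin 2) (i : ℕ) + Finsupp.single 1 (d - (i : ℕ)) : Fin 2 →₀ ℕ)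
       = Finsupp.single 0 (j : ℕ) + Finsupp.single 1 (d - (j : ℕ))) : i = j := by
  have h0 := DFunLike.congr_fun h 0
  simp [Finsupp.single_apply] at h0
  exact Fin.ext h0

lemma coeff_hommap (d : ℕ) (f : Fin (d + 1) → k) (i : Fin (d + 1)) :
    coeff (Finsupp.single 0 (i : ℕ) + Finsupp.single 1 (d - i)) (hommap d f) = f i := by
  classical
  rw [hommap, coeff_sum, Finset.sum_eq_single i]
  · rw [coeff_monomial, if_pos rfl]
  · intro j _ hji
    rw [coeff_monomial, if_neg]
    intro h
    exact hji (expo_inj h)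
  · simp

lemma coeff_hommap_ne {d : ℕ} {f : Fin (d + 1) → k} {m : Fin 2 →₀ ℕ}
    (h : coeff m (hommap d f) ≠ 0) :
    ∃ i : Fin (d + 1),
      m = Finsupp.single 0 (i : ℕ) + Finsupp.single 1 (d - i) ∧ f i ≠ 0 := by
  classical
  rw [hommap, coeff_sum] at h
  obtain ⟨i, -, hi⟩ := Finset.exists_ne_zero_of_sum_ne_zero h
  rw [coeff_monomial] at hi
  by_cases hc : (Finsupp.single 0 ((i : Fin (d+1)) : ℕ) + Finsupp.single 1 (d - (i : ℕ))
      : Fin 2 →₀ ℕ) = m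
  · refine ⟨i, hc.symm, ?_⟩
    rwa [if_pos hc] at hi
  · rw [if_neg hc] at hi
    exact absurd rfl hi

lemma hommap_homog (d : ℕ) (f : Fin (d + 1) → k) : (hommap d f).IsHomogeneous d := by
  rw [homog_iff]
  intro m hm
  obtain ⟨i, rfl, -⟩ := coeff_hommap_ne hm
  have hi := i.isLt
  simp [Finsupp.single_apply]
  omega

lemma hommap_inj (d : ℕ) : Function.Injective (hommap (k := k) d) := by
  intro f g h
  funext i
  rw [← coeff_hommap d f i, ← coeff_hommap d g i, h]

lemma hommap_surj {d : ℕ} {P : R2} (hP : P.IsHomogeneous d) :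
    P = hommap d (fun i => coeff (Finsupp.single 0 (i : ℕ) + Finsupp.single 1 (d - i)) P) := by
  apply MvPolynomial.ext
  intro m
  by_cases hm : coeff m P = 0
  · rw [hm]
    by_contra hc
    obtain ⟨i, hmeq, hf⟩ := coeff_hommap_ne (Ne.symm hc)
    apply hf
    rw [← hmeq] at *
    exact hm
  · have hdeg := homog_iff.mp hP m hm
    have hlt : m 0 < d + 1 := by omega
    have hm1 : m 1 = d - ((⟨m 0, hlt⟩ : Fin (d + 1)) : ℕ) := by simp; omega
    have hmeq : m = Finsupp.single 0 ((⟨m 0, hlt⟩ : Fin (d + 1)) : ℕ)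
        + Finsupp.single 1 (d - ((⟨m 0, hlt⟩ : Fin (d + 1)) : ℕ)) := by
      conv_lhs => rw [fin2_decomp m, hm1]
    rw [hmeq, coeff_hommap]

lemma coeff_hommap_zero (d : ℕ) (f : Fin (d + 1) → k) :
    coeff (Finsupp.single 1 d) (hommap d f) = f 0 := by
  have := coeff_hommap d f 0
  simpa using this

lemma homogSet_eq (d : ℕ) :
    {P : R2 | P.IsHomogeneous d} = Set.range (hommap (k := k) d) := by
  ext P
  constructor
  · intro h
    exact ⟨_, (hommap_surj h).symm⟩
  · rintro ⟨f, rfl⟩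
    exact hommap_homog d f

lemma finite_hCP (a b : ℕ) : (homCoprimePairs k a b).Finite := by
  have h1 : ({P : R2 | P.IsHomogeneous a}).Finite := by
    rw [homogSet_eq]; exact Set.finite_range _
  have h2 : ({P : R2 | P.IsHomogeneous b}).Finite := by
    rw [homogSet_eq]; exact Set.finite_range _
  exact (h1.prod h2).subset (fun x hx => Set.mem_prod.mpr ⟨hx.1, hx.2.1⟩)

lemma ncard_prod {α β : Type*} (s : Set α) (t : Set β) :
    (s ×ˢ t).ncard = s.ncard * t.ncard := by
  rw [← Nat.card_coe_set_eq, ← Nat.card_coe_set_eq, ← Nat.card_coe_set_eq,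
    Nat.card_congr (Equiv.Set.prod s t), Nat.card_prod]

lemma ncard_homog_notdvd (a : ℕ) (q : ℕ) (hq : Fintype.card k = q) :
    ({P : R2 | P.IsHomogeneous a ∧ ¬ X (0 : Fin 2) ∣ P}).ncard = (q - 1) * q ^ a := by
  classical
  have hset : {P : R2 | P.IsHomogeneous a ∧ ¬ X (0 : Fin 2) ∣ P}
      = hommap a '' {f : Fin (a + 1) → k | f 0 ≠ 0} := by
    ext P
    constructor
    · rintro ⟨hh, hd⟩
      refine ⟨fun i => coeff (Finsupp.single 0 (i : ℕ) + Finsupp.single 1 (a - i)) P, ?_,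
        (hommap_surj hh).symm⟩
      have := coeff_U_ne_zero hh hd
      simpa using this
    · rintro ⟨f, hf, rfl⟩
      refine ⟨hommap_homog a f, not_dvd_of_coeff_U (a := a) ?_⟩
      rw [coeff_hommap_zero]
      exact hf
  rw [hset, Set.ncard_image_of_injective _ (hommap_inj a), ← Nat.card_coe_set_eq]
  have E : ↥{f : Fin (a + 1) → k | f 0 ≠ 0} ≃ {x : k // x ≠ 0} × (Fin a → k) :=
    { toFun := fun f => (⟨f.1 0, f.2⟩, fun i => f.1 i.succ)
      invFun := fun p => ⟨Fin.cons p.1.1 p.2, by simp [Fin.cons_zero]; exact p.1.2⟩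
      left_inv := by
        rintro ⟨f, hf⟩
        apply Subtype.ext
        exact Fin.cons_self_tail f
      right_inv := by
        rintro ⟨⟨x, hx⟩, g⟩
        refine Prod.ext ?_ ?_
        · apply Subtype.ext
          simp [Fin.cons_zero]
        · funext i
          simp [Fin.cons_succ] }
  rw [Nat.card_congr E, Nat.card_prod, Nat.card_eq_fintype_card, Nat.card_eq_fintype_card]
  have h1 : Fintype.card {x : k // x ≠ 0} = q - 1 := by
    have := Fintype.card_subtype_compl (fun x : k => x = 0)
    rw [Fintype.card_subtype_eq (0 : k)] at this
    simpa [hq] using this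
  rw [h1, Fintype.card_fun, hq]
  simp

lemma not_unit_of_homog {P : R2} {a : ℕ} (hP : P.IsHomogeneous a) (ha : 1 ≤ a) :
    ¬ IsUnit P := by
  intro h
  obtain ⟨V, hV⟩ := h.exists_right_inv
  have h0 : constantCoeff P * constantCoeff V = 1 := by
    rw [← map_mul, hV, map_one]
  have hz : constantCoeff (P : R2) = 0 := by
    have : coeff 0 P = 0 := hP.coeff_eq_zero (by rw [map_zero]; omega)
    simpa [constantCoeff_eq] using this
  rw [hz, zero_mul] at h0
  exact zero_ne_one h0

lemma homog_zero_C {Q : R2} (hQ : Q.IsHomogeneous 0) : ∃ u : k, Q = C u := by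
  refine ⟨coeff 0 Q, ?_⟩
  nth_rewrite 1 [hommap_surj hQ]
  rw [hommap, Fin.sum_univ_one]
  rw [show (Finsupp.single (0 : Fin 2) (((0 : Fin 1)) : ℕ)
      + Finsupp.single 1 (0 - (((0 : Fin 1)) : ℕ)) : Fin 2 →₀ ℕ) = 0 by simp]
  rw [C_apply]

lemma base (a : ℕ) (ha : 1 ≤ a) (q : ℕ) (hq : Fintype.card k = q) :
    (homCoprimePairs k a 0).ncard = ((q - 1) * q ^ a) * (q - 1) := by
  classical
  have hset : homCoprimePairs k a 0
      = {P : R2 | P.IsHomogeneous a ∧ ¬ X (0 : Fin 2) ∣ P}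
        ×ˢ ((fun u : k => (C u : R2)) '' {u : k | u ≠ 0}) := by
    ext ⟨P, Q⟩
    constructor
    · rintro ⟨hP, hQ, hrel, hdvd⟩
      refine Set.mem_prod.mpr ⟨⟨hP, hdvd⟩, ?_⟩
      obtain ⟨u, rfl⟩ := homog_zero_C hQ
      refine ⟨u, ?_, rfl⟩
      rintro rfl
      rw [map_zero] at hrel
      exact not_unit_of_homog hP ha (isRelPrime_zero_right.mp hrel)
    · intro hmem
      obtain ⟨⟨hP, hdvd⟩, u, hu, hQ⟩ := Set.mem_prod.mp hmem
      refine ⟨hP, ?_, ?_, hdvd⟩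
      · rw [← hQ]; exact isHomogeneous_C _ _
      · rw [← hQ]
        exact ((isUnit_iff_ne_zero.mpr hu).map (C : k →+* R2)).isRelPrime_right
  rw [hset, ncard_prod]
  congr 1
  · exact ncard_homog_notdvd a q hq
  · rw [Set.ncard_image_of_injective _ (C_injective (Fin 2) k), ← Nat.card_coe_set_eq]
    have h1 : Nat.card {x : k // x ≠ 0} = q - 1 := by
      rw [Nat.card_eq_fintype_card]
      have := Fintype.card_subtype_compl (fun x : k => x = 0)
      rw [Fintype.card_subtype_eq (0 : k)] at this
      simpa [hq] using this
    exact h1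

lemma coeff_U_top {a c : ℕ} (hac : a ≤ c + 1) (e : k) (P : R2) :
    coeff (Finsupp.single 1 (c + 1)) (C e * X (1 : Fin 2) ^ (c + 1 - a) * P)
      = e * coeff (Finsupp.single 1 a) P := by
  rw [mul_assoc, coeff_C_mul]
  congr 1
  rw [show (Finsupp.single (1 : Fin 2) (c + 1) : Fin 2 →₀ ℕ)
      = Finsupp.single 1 (c + 1 - a) + Finsupp.single 1 a by
    rw [← Finsupp.single_add]; congr 1; omega]
  rw [X_pow_eq_monomial, coeff_monomial_mul, one_mul]

lemma coeff_U_top_X0 {c : ℕ} (B : R2) :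
    coeff (Finsupp.single 1 (c + 1)) (X (0 : Fin 2) * B) = 0 := by
  by_contra h
  have := X0_dvd_iff.mp (dvd_mul_right (X (0 : Fin 2)) B) _ h
  simp [Finsupp.single_apply] at this

lemma homog_shift {a c : ℕ} (hac : a ≤ c + 1) (e : k) {P : R2} (hP : P.IsHomogeneous a) :
    (C e * X (1 : Fin 2) ^ (c + 1 - a) * P).IsHomogeneous (c + 1) := by
  have h := ((isHomogeneous_C (Fin 2) e).mul
    ((isHomogeneous_X k (1 : Fin 2)).pow (c + 1 - a))).mul hP
  have heq : 0 + 1 * (c + 1 - a) + a = c + 1 := by omega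
  rwa [heq] at h

lemma step1 (q : ℕ) (hq : Fintype.card k = q) (a c : ℕ) (ha : 1 ≤ a) (hac : a ≤ c + 1) :
    (homCoprimePairs k a (c + 1)).ncard = q * (homCoprimePairs k a c).ncard := by
  classical
  have memF : ∀ (e : k) (P B : R2), (P, B) ∈ homCoprimePairs k a c →
      (P, C e * X (1 : Fin 2) ^ (c + 1 - a) * P + X (0 : Fin 2) * B)
        ∈ homCoprimePairs k a (c + 1) := by
    rintro e P B ⟨hP, hB, hrel, hdvd⟩
    refine ⟨hP, ?_, ?_, hdvd⟩
    · refine (homog_shift hac e hP).add ?_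
      have h := (isHomogeneous_X k (0 : Fin 2)).mul hB
      rwa [show 1 + c = c + 1 by omega] at h
    · have hx : IsRelPrime P (X (0 : Fin 2) * B) := (relprime_X0 hdvd).mul_right hrel
      have h := hx.mul_add_right_right (C e * X (1 : Fin 2) ^ (c + 1 - a))
      exact h
  let F : k × ↥(homCoprimePairs k a c) → ↥(homCoprimePairs k a (c + 1)) := fun p =>
    ⟨(p.2.1.1, C p.1 * X (1 : Fin 2) ^ (c + 1 - a) * p.2.1.1 + X (0 : Fin 2) * p.2.1.2),
      memF p.1 p.2.1.1 p.2.1.2 (by exact p.2.2)⟩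
  have hFbij : Function.Bijective F := by
    constructor
    · rintro ⟨e, ⟨⟨P, B⟩, hPB⟩⟩ ⟨e', ⟨⟨P', B'⟩, hPB'⟩⟩ heq
      simp only [F, Subtype.mk.injEq, Prod.mk.injEq] at heq
      obtain ⟨hP, h2⟩ := heq
      subst hP
      have hcUa := coeff_U_ne_zero hPB.1 hPB.2.2.2
      have hee : e = e' := by
        have h3 := congrArg (coeff (Finsupp.single 1 (c + 1))) h2
        rw [coeff_add, coeff_add, coeff_U_top hac, coeff_U_top hac,
          coeff_U_top_X0, coeff_U_top_X0, add_zero, add_zero] at h3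
        exact mul_right_cancel₀ hcUa h3
      subst hee
      have hBB : B = B' := by
        have h4 := add_left_cancel h2
        exact mul_left_cancel₀ (X_ne_zero (0 : Fin 2)) h4
      subst hBB
      rfl
    · rintro ⟨⟨P, Q⟩, hP, hQ, hrel, hdvd⟩
      have hcUa := coeff_U_ne_zero hP hdvd
      set e := coeff (Finsupp.single 1 (c + 1)) Q / coeff (Finsupp.single 1 a) P with he
      set D := Q - C e * X (1 : Fin 2) ^ (c + 1 - a) * P with hD
      have hDhom : D.IsHomogeneous (c + 1) := hQ.sub (homog_shift hac e hP)
      have hdvdD : X (0 : Fin 2) ∣ D := by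
        rw [X0_dvd_iff]
        intro m hm
        intro hm0
        have hma := homog_iff.mp hDhom m hm
        have hmeq : m = Finsupp.single 1 (c + 1) := by
          have h1 : m 1 = c + 1 := by omega
          rw [fin2_decomp m, hm0, h1]; simp
        rw [hmeq] at hm
        apply hm
        rw [hD, coeff_sub, coeff_U_top hac, he, div_mul_cancel₀ _ hcUa, sub_self]
      obtain ⟨B, hB⟩ := hdvdD
      have hBhom : B.IsHomogeneous c := homog_of_X_mul (hB ▸ hDhom)
      have hrelB : IsRelPrime P B := by
        have h1 : IsRelPrime P (X (0 : Fin 2) * B) := by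
          rw [← hB, hD]
          have h := hrel.add_mul_right_right (-(C e * X (1 : Fin 2) ^ (c + 1 - a)))
          rwa [neg_mul, ← sub_eq_add_neg] at h
        exact h1.of_mul_right_right
      refine ⟨⟨e, ⟨(P, B), hP, hBhom, hrelB, hdvd⟩⟩, ?_⟩
      apply Subtype.ext
      simp only [F]
      refine Prod.ext rfl ?_
      show C e * X (1 : Fin 2) ^ (c + 1 - a) * P + X (0 : Fin 2) * B = Q
      rw [← hB, hD]; ring
  have hcard := Nat.card_eq_of_bijective F hFbij
  rw [Nat.card_prod, Nat.card_eq_fintype_card, hq, Nat.card_coe_set_eq,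
    Nat.card_coe_set_eq] at hcard
  exact hcard.symm

lemma split_lemma (a c : ℕ) :
    (homCoprimePairs k a (c + 1)).ncard
      = (homCoprimePairs k a c).ncard
        + ({x ∈ homCoprimePairs k a (c + 1) | ¬ X (0 : Fin 2) ∣ x.2}).ncard := by
  classical
  have hun : homCoprimePairs k a (c + 1)
      = {x ∈ homCoprimePairs k a (c + 1) | X (0 : Fin 2) ∣ x.2}
        ∪ {x ∈ homCoprimePairs k a (c + 1) | ¬ X (0 : Fin 2) ∣ x.2} := by
    ext x
    by_cases h : X (0 : Fin 2) ∣ x.2 <;> simp [h]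
  have hdisj : Disjoint {x ∈ homCoprimePairs k a (c + 1) | X (0 : Fin 2) ∣ x.2}
      {x ∈ homCoprimePairs k a (c + 1) | ¬ X (0 : Fin 2) ∣ x.2} := by
    rw [Set.disjoint_left]
    rintro x ⟨-, h1⟩ ⟨-, h2⟩
    exact h2 h1
  have hfin := finite_hCP (k := k) a (c + 1)
  have himg : {x ∈ homCoprimePairs k a (c + 1) | X (0 : Fin 2) ∣ x.2}
      = (fun x : R2 × R2 => (x.1, X (0 : Fin 2) * x.2)) '' homCoprimePairs k a c := by
    ext ⟨P, Q⟩
    constructor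
    · rintro ⟨⟨hP, hQ, hrel, hdvd⟩, hdQ⟩
      obtain ⟨B, rfl⟩ := hdQ
      exact ⟨(P, B), ⟨hP, homog_of_X_mul hQ, hrel.of_mul_right_right, hdvd⟩, rfl⟩
    · rintro ⟨⟨P', B⟩, ⟨hP, hB, hrel, hdvd⟩, heq⟩
      cases heq
      refine ⟨⟨hP, ?_, (relprime_X0 hdvd).mul_right hrel, hdvd⟩, dvd_mul_right _ _⟩
      have h := (isHomogeneous_X k (0 : Fin 2)).mul hB
      rwa [show 1 + c = c + 1 by omega] at h
  have hginj : Function.Injective (fun x : R2 × R2 => (x.1, X (0 : Fin 2) * x.2)) := by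
    rintro ⟨P, Q⟩ ⟨P', Q'⟩ h
    simp only [Prod.mk.injEq] at h
    exact Prod.ext h.1 (mul_left_cancel₀ (X_ne_zero (0 : Fin 2)) h.2)
  have hsum : (homCoprimePairs k a (c + 1)).ncard
      = ({x ∈ homCoprimePairs k a (c + 1) | X (0 : Fin 2) ∣ x.2}).ncard
        + ({x ∈ homCoprimePairs k a (c + 1) | ¬ X (0 : Fin 2) ∣ x.2}).ncard := by
    rw [← Set.ncard_union_eq hdisj (hfin.subset (Set.sep_subset _ _))
      (hfin.subset (Set.sep_subset _ _)), ← hun]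
  rw [hsum, himg, Set.ncard_image_of_injective _ hginj]

lemma swap_lemma (a b : ℕ) :
    ({x ∈ homCoprimePairs k b a | ¬ X (0 : Fin 2) ∣ x.2}).ncard
      = ({x ∈ homCoprimePairs k a b | ¬ X (0 : Fin 2) ∣ x.2}).ncard := by
  have hset : {x ∈ homCoprimePairs k b a | ¬ X (0 : Fin 2) ∣ x.2}
      = Prod.swap '' {x ∈ homCoprimePairs k a b | ¬ X (0 : Fin 2) ∣ x.2} := by
    ext ⟨P, Q⟩
    constructor
    · rintro ⟨⟨hP, hQ, hrel, hdvd⟩, hd2⟩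
      exact ⟨(Q, P), ⟨⟨hQ, hP, hrel.symm, hd2⟩, hdvd⟩, rfl⟩
    · rintro ⟨⟨P', Q'⟩, ⟨⟨hP, hQ, hrel, hdvd⟩, hd2⟩, heq⟩
      cases heq
      exact ⟨⟨hQ, hP, hrel.symm, hd2⟩, hdvd⟩
  rw [hset, Set.ncard_image_of_injective _ Prod.swap_injective]

lemma formula (q : ℕ) (hq : Fintype.card k = q) :
    ∀ n a b, 1 ≤ a → a + b = n → (homCoprimePairs k a b).ncard = (q - 1) ^ 2 * q ^ n := by
  intro n
  induction n using Nat.strong_induction_on with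
  | _ n IH =>
    intro a b ha hab
    cases b with
    | zero =>
      rw [base a ha q hq]
      have han : a = n := by omega
      subst han
      ring
    | succ c =>
      by_cases hac : a ≤ c + 1
      · rw [step1 q hq a c ha hac, IH (n - 1) (by omega) a c ha (by omega)]
        conv_rhs => rw [show n = (n - 1) + 1 by omega]
        rw [pow_succ]
        ring
      · obtain ⟨d, rfl⟩ : ∃ d, a = d + 1 := ⟨a - 1, by omega⟩
        have h1 := split_lemma (k := k) (d + 1) c
        have h2 := split_lemma (k := k) (c + 1) d
        have h3 := swap_lemma (k := k) (d + 1) (c + 1)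
        have h4 := step1 q hq (c + 1) d (by omega) (by omega)
        have h5 := IH (n - 1) (by omega) (d + 1) c (by omega) (by omega)
        have h6 := IH (n - 1) (by omega) (c + 1) d (by omega) (by omega)
        have hqV : q * ((q - 1) ^ 2 * q ^ (n - 1)) = (q - 1) ^ 2 * q ^ n := by
          conv_rhs => rw [show n = (n - 1) + 1 by omega]
          rw [pow_succ]
          ring
        rw [h6] at h4
        rw [hqV] at h4
        rw [h5] at h1
        rw [h6] at h2
        omega

end Stmt2Aux

/-- For 1 ≤ j ≤ t-1, |P_{t-j,j}| = q·|P_{j,t-j-1}|. -/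
theorem stmt_2 (k : Type) [Field k] [Fintype k] (q : ℕ) (hq : Fintype.card k = q)
    (t j : ℕ) (h₁ : 1 ≤ j) (h₂ : j ≤ t - 1) :
    Set.ncard (homCoprimePairs k (t - j) j)
      = q * Set.ncard (homCoprimePairs k j (t - j - 1)) := by
  have hjt : j + 1 ≤ t := by omega
  rw [Stmt2Aux.formula q hq t (t - j) j (by omega) (by omega),
    Stmt2Aux.formula q hq (t - 1) j (t - j - 1) h₁ (by omega)]
  set s := t - 1 with hs
  rw [show t = s + 1 by omega, pow_succ]
  ring
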